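/- Ando's inequality: if Φ : S^d_+ → S^{d'}_+ is a strictly positive linear map (maps positive definite matrices to positive definite matrices) and P, Q are positive definite d×d matrices, then Φ(P # Q) ⪯ Φ(P) # Φ(Q), where # denotes the matrix geometric mean. -/

import Mathlib

open Matrix

/-- Real power of a matrix via the spectral decomposition (defined for Hermitian input). -/
noncomputable def mpow {d : ℕ} (A : Matrix (Fin d) (Fin d) ℝ) (t : ℝ) : Matrix (Fin d) (Fin d) ℝ :=
  if hA : A.IsHermitian then
    (hA.eigenvectorUnitary : Matrix (Fin d) (Fin d) ℝ) *
      Matrix.diagonal (fun i => hA.eigenvalues i ^ t) *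
      star (hA.eigenvectorUnitary : Matrix (Fin d) (Fin d) ℝ)
  else A

/-- The geodesic `X #ₜ Y = X^{1/2} (X^{-1/2} Y X^{-1/2})^t X^{1/2}`. -/
noncomputable def geo {d : ℕ} (X Y : Matrix (Fin d) (Fin d) ℝ) (t : ℝ) : Matrix (Fin d) (Fin d) ℝ :=
  mpow X (1/2) * mpow (mpow X (-(1/2)) * Y * mpow X (-(1/2))) t * mpow X (1/2)

/-- The matrix geometric mean `X # Y`. -/
noncomputable def gmean {d : ℕ} (X Y : Matrix (Fin d) (Fin d) ℝ) : Matrix (Fin d) (Fin d) ℝ :=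
  geo X Y (1/2)

/-!
Congruence by `P^{1/2}` and `Φ(P)^{-1/2}` turns `Φ` into the unital positive map
`Ψ X = Φ(P)^{-1/2} Φ(P^{1/2} X P^{1/2}) Φ(P)^{-1/2}`. For `R = (P^{-1/2} Q P^{-1/2})^{1/2}` and
`T = (Φ(P)^{-1/2} Φ(Q) Φ(P)^{-1/2})^{1/2}` we have `Ψ(R²) = T²`, so Kadison's inequality
`Ψ(R)² ⪯ Ψ(R²)` and the operator monotonicity of the square root give `Ψ(R) ⪯ T`; congruence by
`Φ(P)^{1/2}` turns this into `Φ(P # Q) ⪯ Φ(P) # Φ(Q)`. Kadison's inequality itself follows from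
a spectral resolution `R = ∑ λᵢ Eᵢ`, `∑ Eᵢ = 1`, as
`Ψ(R²) - Ψ(R)² = ∑ (λᵢ - Ψ R) Ψ(Eᵢ) (λᵢ - Ψ R)`.
-/

section Algebra

variable {ι 𝕜 R : Type*} [CommRing 𝕜] [Ring R] [Algebra 𝕜 R]

theorem sum_smul_sub_mul_self_eq_sum_mul_mul (s : Finset ι) (c : ι → 𝕜) (q : ι → R)
    (hq : ∑ i ∈ s, q i = 1) :
    ∑ i ∈ s, (c i * c i) • q i - (∑ i ∈ s, c i • q i) * ∑ i ∈ s, c i • q i =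
      ∑ i ∈ s, (c i • 1 - ∑ j ∈ s, c j • q j) * q i * (c i • 1 - ∑ j ∈ s, c j • q j) := by
  set x := ∑ j ∈ s, c j • q j
  have expand : ∀ i, (c i • 1 - x) * q i * (c i • 1 - x) =
      (c i * c i) • q i - c i • (q i * x) - c i • (x * q i) + x * q i * x := fun i => by
    simp only [sub_mul, mul_sub, smul_mul_assoc, mul_smul_comm, one_mul, mul_one, smul_sub,
      smul_smul]
    abel
  have hqx : ∑ i ∈ s, c i • (q i * x) = x * x := by
    simp only [← smul_mul_assoc, ← Finset.sum_mul, x]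
  have hxq : ∑ i ∈ s, c i • (x * q i) = x * x := by
    simp only [← mul_smul_comm, ← Finset.mul_sum, x]
  have hxqx : ∑ i ∈ s, x * q i * x = x * x := by
    rw [← Finset.sum_mul, ← Finset.mul_sum, hq, mul_one]
  simp only [expand, Finset.sum_add_distrib, Finset.sum_sub_distrib, hqx, hxq, hxqx]
  abel

end Algebra

namespace Matrix

variable {n m : Type*} [Fintype m] [DecidableEq n]

theorem PosSemidef.map_of_map_posDef {Φ : Matrix n n ℝ →ₗ[ℝ] Matrix m m ℝ}
    (hΦ : ∀ X, X.PosDef → (Φ X).PosDef) {X : Matrix n n ℝ} (hX : X.PosSemidef) :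
    (Φ X).PosSemidef := by
  have hΦ1 : (Φ 1).PosDef := hΦ 1 .one
  have hshift : ∀ ε : ℝ, 0 < ε → (Φ X + ε • Φ 1).PosDef := fun ε hε => by
    simpa only [map_add, map_smul] using hΦ _ (PosDef.posSemidef_add hX (PosDef.one.smul hε))
  have hherm : (Φ X).IsHermitian := by
    simpa using (hshift 1 one_pos).isHermitian.sub hΦ1.isHermitian
  refine .of_dotProduct_mulVec_nonneg hherm fun x => ?_
  rcases eq_or_ne x 0 with rfl | hx
  · simp
  have hb : 0 < star x ⬝ᵥ Φ 1 *ᵥ x := hΦ1.dotProduct_mulVec_pos hx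
  refine le_of_forall_pos_lt_add fun ε hε => ?_
  have := (hshift (ε / star x ⬝ᵥ Φ 1 *ᵥ x) (div_pos hε hb)).dotProduct_mulVec_pos hx
  rwa [add_mulVec, dotProduct_add, smul_mulVec, dotProduct_smul, smul_eq_mul,
    div_mul_cancel₀ _ hb.ne'] at this

variable [Fintype n]

/-- If `T - S` had an eigenvector `v` with eigenvalue `μ < 0`, then
`vᵀ (T² - S²) v = μ vᵀ (T + S) v < 0`, since `T² - S² = T (T - S) + (T - S) S`. -/
theorem PosDef.posSemidef_sub_of_posSemidef_mul_self_sub {S T : Matrix n n ℝ} (hT : T.PosDef)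
    (hS : S.PosSemidef) (h : (T * T - S * S).PosSemidef) : (T - S).PosSemidef := by
  have hR : (T - S).IsHermitian := hT.isHermitian.sub hS.isHermitian
  refine hR.posSemidef_iff_eigenvalues_nonneg.mpr fun i => ?_
  set μ := hR.eigenvalues i
  set v : n → ℝ := ⇑(hR.eigenvectorBasis i)
  have hv : v ≠ 0 := fun h0 => hR.eigenvectorBasis.orthonormal.ne_zero i (by simpa [v] using h0)
  have hev : (T - S) *ᵥ v = μ • v := hR.mulVec_eigenvectorBasis i
  have hev' : v ᵥ* (T - S) = μ • v := by
    rw [← mulVec_transpose, ← conjTranspose_eq_transpose_of_trivial, hR.eq, hev]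
  have hquad : v ⬝ᵥ (T * T - S * S) *ᵥ v = μ * (v ⬝ᵥ T *ᵥ v + v ⬝ᵥ S *ᵥ v) := by
    rw [show T * T - S * S = T * (T - S) + (T - S) * S by noncomm_ring, add_mulVec,
      dotProduct_add, ← mulVec_mulVec, hev, ← mulVec_mulVec, dotProduct_mulVec _ (T - S),
      hev', mulVec_smul, dotProduct_smul, smul_dotProduct, smul_eq_mul, smul_eq_mul, mul_add]
  have hTv : 0 < v ⬝ᵥ T *ᵥ v := by simpa using hT.dotProduct_mulVec_pos hv
  have hSv : 0 ≤ v ⬝ᵥ S *ᵥ v := by simpa using hS.dotProduct_mulVec_nonneg v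
  have hnonneg : 0 ≤ v ⬝ᵥ (T * T - S * S) *ᵥ v := by simpa using h.dotProduct_mulVec_nonneg v
  rw [hquad] at hnonneg
  exact nonneg_of_mul_nonneg_left hnonneg (by positivity)

theorem IsHermitian.exists_posSemidef_resolution {A : Matrix n n ℝ} (hA : A.IsHermitian) :
    ∃ E : n → Matrix n n ℝ, (∀ i, (E i).PosSemidef) ∧ ∑ i, E i = 1 ∧
      A = ∑ i, hA.eigenvalues i • E i ∧
      A * A = ∑ i, (hA.eigenvalues i * hA.eigenvalues i) • E i := by
  set U : Matrix n n ℝ := ↑hA.eigenvectorUnitary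
  have hUU : star U * U = 1 := Unitary.coe_star_mul_self _
  have hUU' : U * star U = 1 := Unitary.coe_mul_star_self _
  have hconj : ∀ f : n → ℝ,
      U * diagonal f * star U = ∑ i, f i • (U * diagonal (Pi.single i 1) * star U) := by
    intro f
    have hdiag : diagonal f = ∑ i, f i • diagonal (Pi.single i 1) := by
      ext j k
      by_cases hjk : j = k <;> simp [Pi.single_apply, Matrix.sum_apply, hjk]
    simp only [hdiag, Finset.mul_sum, Finset.sum_mul, mul_smul_comm, smul_mul_assoc]
  have hA' : A = U * diagonal hA.eigenvalues * star U := hA.spectral_theorem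
  refine ⟨fun i => U * diagonal (Pi.single i 1) * star U, fun i => ?_, ?_, ?_, ?_⟩
  · exact (PosSemidef.diagonal (Pi.single_nonneg.mpr zero_le_one)).mul_mul_conjTranspose_same U
  · rw [← Finset.sum_congr rfl fun i _ => one_smul ℝ _, ← hconj, diagonal_one, mul_one, hUU']
  · rw [← hconj, ← hA']
  · calc A * A = U * diagonal hA.eigenvalues * star U * (U * diagonal hA.eigenvalues * star U) :=
          congrArg₂ _ hA' hA'
      _ = _ := by
        rw [← hconj, mul_assoc, ← mul_assoc (star U), ← mul_assoc (star U), hUU, one_mul,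
          ← mul_assoc, mul_assoc U, diagonal_mul_diagonal]

theorem kadison_inequality [DecidableEq m] {Ψ : Matrix n n ℝ →ₗ[ℝ] Matrix m m ℝ}
    (hΨ : ∀ X, X.PosSemidef → (Ψ X).PosSemidef) (hΨ1 : Ψ 1 = 1) {A : Matrix n n ℝ}
    (hA : A.IsHermitian) : (Ψ (A * A) - Ψ A * Ψ A).PosSemidef := by
  obtain ⟨E, hE, hsum, hA_eq, hAA_eq⟩ := hA.exists_posSemidef_resolution
  set c := hA.eigenvalues
  have hΨA : Ψ A = ∑ i, c i • Ψ (E i) := by simp only [hA_eq, map_sum, map_smul]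
  have hΨAA : Ψ (A * A) = ∑ i, (c i * c i) • Ψ (E i) := by simp only [hAA_eq, map_sum, map_smul]
  have hΨsum : ∑ i, Ψ (E i) = 1 := by rw [← map_sum, hsum, hΨ1]
  have hΨA_herm : (Ψ A).IsHermitian := by
    rw [hΨA]
    exact isSelfAdjoint_sum _ fun i _ => (hΨ _ (hE i)).isHermitian.smul (IsSelfAdjoint.all _)
  rw [hΨAA, hΨA, sum_smul_sub_mul_self_eq_sum_mul_mul _ _ _ hΨsum, ← hΨA]
  refine posSemidef_sum _ fun i _ => ?_
  have hherm : (c i • 1 - Ψ A).IsHermitian :=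
    (isHermitian_one.smul (IsSelfAdjoint.all (c i))).sub hΨA_herm
  have := (hΨ _ (hE i)).mul_mul_conjTranspose_same (c i • 1 - Ψ A)
  rwa [hherm.eq] at this

end Matrix

section MatrixPower

variable {d : ℕ} {A : Matrix (Fin d) (Fin d) ℝ}

theorem mpow_of_isHermitian (hA : A.IsHermitian) (t : ℝ) :
    mpow A t = (hA.eigenvectorUnitary : Matrix (Fin d) (Fin d) ℝ) *
      diagonal (fun i => hA.eigenvalues i ^ t) *
      star (hA.eigenvectorUnitary : Matrix (Fin d) (Fin d) ℝ) :=
  dif_pos hA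

theorem mpow_one (hA : A.IsHermitian) : mpow A 1 = A := by
  simp only [mpow_of_isHermitian hA, Real.rpow_one]
  exact hA.spectral_theorem.symm

theorem mpow_zero (hA : A.IsHermitian) : mpow A 0 = 1 := by
  simp only [mpow_of_isHermitian hA, Real.rpow_zero, diagonal_one, mul_one]
  exact Unitary.coe_mul_star_self _

theorem mpow_add (hA : A.PosDef) (s t : ℝ) : mpow A (s + t) = mpow A s * mpow A t := by
  simp only [mpow_of_isHermitian hA.isHermitian, mul_assoc]
  rw [← mul_assoc (star _) _ (diagonal _ * _), Unitary.coe_star_mul_self, one_mul,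
    ← mul_assoc (diagonal _), diagonal_mul_diagonal]
  simp only [Real.rpow_add (hA.eigenvalues_pos _)]

theorem posDef_mpow (hA : A.PosDef) (t : ℝ) : (mpow A t).PosDef := by
  rw [mpow_of_isHermitian hA.isHermitian, Unitary.isUnit_coe.posDef_star_right_conjugate_iff]
  exact PosDef.diagonal fun i => Real.rpow_pos_of_pos (hA.eigenvalues_pos i) t

theorem mpow_mul_mpow_neg (hA : A.PosDef) (t : ℝ) : mpow A t * mpow A (-t) = 1 := by
  rw [← mpow_add hA, add_neg_cancel, mpow_zero hA.isHermitian]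

theorem mpow_neg_mul_mpow (hA : A.PosDef) (t : ℝ) : mpow A (-t) * mpow A t = 1 := by
  rw [← mpow_add hA, neg_add_cancel, mpow_zero hA.isHermitian]

theorem mpow_half_mul_mpow_half (hA : A.PosDef) : mpow A (1 / 2) * mpow A (1 / 2) = A := by
  rw [← mpow_add hA, add_halves, mpow_one hA.isHermitian]

theorem mpow_mul_mpow_neg_conj (hA : A.PosDef) (t : ℝ) (X : Matrix (Fin d) (Fin d) ℝ) :
    mpow A t * (mpow A (-t) * X * mpow A (-t)) * mpow A t = X := by
  simp only [← mul_assoc, mpow_mul_mpow_neg hA, one_mul]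
  rw [mul_assoc, mpow_neg_mul_mpow hA, mul_one]

theorem posDef_mpow_mul_mul_mpow (hA : A.PosDef) (t : ℝ) {X : Matrix (Fin d) (Fin d) ℝ}
    (hX : X.PosDef) : (mpow A t * X * mpow A t).PosDef := by
  have hAt := posDef_mpow hA t
  have h := hAt.isUnit.posDef_star_right_conjugate_iff.mpr hX
  rwa [star_eq_conjTranspose, hAt.isHermitian.eq] at h

theorem mpow_neg_half_mul_mul_mpow_neg_half (hA : A.PosDef) : mpow A (-(1 / 2)) * A * mpow A (-(1 / 2)) = 1 := by
  nth_rewrite 2 [← mpow_one hA.isHermitian]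
  rw [← mpow_add hA, ← mpow_add hA]
  norm_num [mpow_zero hA.isHermitian]

end MatrixPower

section Sandwich

variable {n m : Type*} [Fintype n] [Fintype m]

def sandwich (Φ : Matrix n n ℝ →ₗ[ℝ] Matrix m m ℝ) (A : Matrix n n ℝ) (B : Matrix m m ℝ) :
    Matrix n n ℝ →ₗ[ℝ] Matrix m m ℝ where
  toFun X := B * Φ (A * X * A) * B
  map_add' X Y := by simp only [mul_add, add_mul, map_add]
  map_smul' c X := by simp only [mul_smul_comm, smul_mul_assoc, map_smul, RingHom.id_apply]

theorem sandwich_apply (Φ : Matrix n n ℝ →ₗ[ℝ] Matrix m m ℝ) (A : Matrix n n ℝ)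
    (B : Matrix m m ℝ) (X : Matrix n n ℝ) : sandwich Φ A B X = B * Φ (A * X * A) * B :=
  rfl

theorem posSemidef_sandwich {Φ : Matrix n n ℝ →ₗ[ℝ] Matrix m m ℝ}
    (hΦ : ∀ X, X.PosSemidef → (Φ X).PosSemidef) {A : Matrix n n ℝ} {B : Matrix m m ℝ}
    (hA : A.IsHermitian) (hB : B.IsHermitian) {X : Matrix n n ℝ} (hX : X.PosSemidef) :
    (sandwich Φ A B X).PosSemidef := by
  have hAXA := hX.mul_mul_conjTranspose_same A
  have hΦAXA := (hΦ _ (hA.eq ▸ hAXA)).mul_mul_conjTranspose_same B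
  rwa [hB.eq] at hΦAXA

end Sandwich

theorem stmt5 {d d' : ℕ}
    (Φ : Matrix (Fin d) (Fin d) ℝ →ₗ[ℝ] Matrix (Fin d') (Fin d') ℝ)
    (hΦ : ∀ X : Matrix (Fin d) (Fin d) ℝ, X.PosDef → (Φ X).PosDef)
    (P Q : Matrix (Fin d) (Fin d) ℝ) (hP : P.PosDef) (hQ : Q.PosDef) :
    (gmean (Φ P) (Φ Q) - Φ (gmean P Q)).PosSemidef := by
  set C := Φ P
  have hC : C.PosDef := hΦ P hP
  set Ψ := sandwich Φ (mpow P (1 / 2)) (mpow C (-(1 / 2)))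
  have hΨ : ∀ X, X.PosSemidef → (Ψ X).PosSemidef := fun X =>
    posSemidef_sandwich (fun Y hY => hY.map_of_map_posDef hΦ)
      (posDef_mpow hP _).isHermitian (posDef_mpow hC _).isHermitian
  have hΨ1 : Ψ 1 = 1 := by
    rw [sandwich_apply, mul_one, mpow_half_mul_mpow_half hP,
      mpow_neg_half_mul_mul_mpow_neg_half hC]
  have hM := posDef_mpow_mul_mul_mpow hP (-(1 / 2)) hQ
  have hN := posDef_mpow_mul_mul_mpow hC (-(1 / 2)) (hΦ Q hQ)
  set R := mpow (mpow P (-(1 / 2)) * Q * mpow P (-(1 / 2))) (1 / 2)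
  set T := mpow (mpow C (-(1 / 2)) * Φ Q * mpow C (-(1 / 2))) (1 / 2)
  have hR : R.PosDef := posDef_mpow hM _
  have hΨRR : Ψ (R * R) = T * T := by
    rw [mpow_half_mul_mpow_half hM, mpow_half_mul_mpow_half hN, sandwich_apply,
      mpow_mul_mpow_neg_conj hP]
  have hTS : (T - Ψ R).PosSemidef :=
    (posDef_mpow hN _).posSemidef_sub_of_posSemidef_mul_self_sub (hΨ R hR.posSemidef)
      (hΨRR ▸ kadison_inequality hΨ hΨ1 hR.isHermitian)
  have hΦG : Φ (gmean P Q) = mpow C (1 / 2) * Ψ R * mpow C (1 / 2) := by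
    rw [sandwich_apply, mpow_mul_mpow_neg_conj hC]
    rfl
  have := hTS.mul_mul_conjTranspose_same (mpow C (1 / 2))
  rwa [(posDef_mpow hC _).isHermitian.eq, mul_sub, sub_mul, ← hΦG] at this
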